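/- Let S be the bilateral shift on ℓ²(ℤ), defined by (Sξ)(k) = ξ(k−1). For every constant C > 0 there exists a finitely supported function α : ℤ → ℂ such that ‖Σ_{k≥0} α(k) S^k‖ > C · ‖Σ_{k∈ℤ} α(k) S^k‖, where ‖·‖ denotes the operator norm on ℓ²(ℤ). (That is, the triangular truncation map Σ_{k∈ℤ} α(k)S^k ↦ Σ_{k≥0} α(k)S^k is unbounded in the operator norm.) -/

import Mathlib

open scoped ENNReal

/-- The bilateral shift `S` on `ℓ²(ℤ)`, `(S ξ)(k) = ξ(k - 1)`, as a unitary
(a linear isometric automorphism). -/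
noncomputable def bilateralShift : lp (fun _ : ℤ => ℂ) 2 ≃ₗᵢ[ℂ] lp (fun _ : ℤ => ℂ) 2 :=
  { toFun := fun ξ => ⟨fun k => ξ (k - 1), by
      apply memℓp_gen
      exact (((lp.memℓp ξ).summable (by norm_num)).comp_injective
        (sub_left_injective : Function.Injective fun k : ℤ => k - 1))⟩
    invFun := fun ξ => ⟨fun k => ξ (k + 1), by
      apply memℓp_gen
      exact (((lp.memℓp ξ).summable (by norm_num)).comp_injective
        (add_left_injective 1 : Function.Injective fun k : ℤ => k + 1))⟩
    map_add' := fun ξ η => rfl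
    map_smul' := fun c ξ => rfl
    left_inv := fun ξ => by
      apply Subtype.ext
      funext k
      show (ξ : ∀ _ : ℤ, ℂ) (k + 1 - 1) = ξ k
      rw [show k + 1 - 1 = k by omega]
    right_inv := fun ξ => by
      apply Subtype.ext
      funext k
      show (ξ : ∀ _ : ℤ, ℂ) (k - 1 + 1) = ξ k
      rw [show k - 1 + 1 = k by omega]
    norm_map' := fun ξ => by
      have h2 : 0 < (2 : ℝ≥0∞).toReal := by norm_num
      rw [lp.norm_eq_tsum_rpow h2, lp.norm_eq_tsum_rpow h2 ξ]
      congr 1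
      exact Equiv.tsum_eq
        ⟨fun k : ℤ => k - 1, fun k : ℤ => k + 1,
          fun k => by show k - 1 + 1 = k; omega, fun k => by show k + 1 - 1 = k; omega⟩
        (fun k : ℤ => ‖ξ k‖ ^ (2 : ℝ≥0∞).toReal) }

/-- A linear isometric automorphism of `ℓ²(ℤ)` viewed as a bounded operator. -/
noncomputable def toCLM (e : lp (fun _ : ℤ => ℂ) 2 ≃ₗᵢ[ℂ] lp (fun _ : ℤ => ℂ) 2) :
    lp (fun _ : ℤ => ℂ) 2 →L[ℂ] lp (fun _ : ℤ => ℂ) 2 :=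
  e.toLinearIsometry.toContinuousLinearMap
noncomputable section
open Finset

abbrev H := lp (fun _ : ℤ => ℂ) 2

-- ‖z^k - 1‖ ≤ k ‖z - 1‖ for ‖z‖ ≤ 1
lemma pow_sub_one_norm_le (z : ℂ) (hz : ‖z‖ ≤ 1) : ∀ k : ℕ, ‖z ^ k - 1‖ ≤ k * ‖z - 1‖ := by
  intro k
  induction k with
  | zero => simp
  | succ k ih =>
    have : z ^ (k + 1) - 1 = z ^ k * (z - 1) + (z ^ k - 1) := by ring
    rw [this]
    calc ‖z ^ k * (z - 1) + (z ^ k - 1)‖ ≤ ‖z ^ k * (z - 1)‖ + ‖z ^ k - 1‖ := norm_add_le _ _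
      _ ≤ 1 * ‖z - 1‖ + k * ‖z - 1‖ := by
          gcongr
          · rw [norm_mul]
            gcongr
            calc ‖z ^ k‖ = ‖z‖ ^ k := norm_pow _ _
              _ ≤ 1 ^ k := by gcongr
              _ = 1 := one_pow _
      _ = (k + 1 : ℕ) * ‖z - 1‖ := by push_cast; ring

-- geometric sum bound
lemma geom_norm_le (w : ℂ) (hw : ‖w‖ ≤ 1) (hw1 : w ≠ 1) (r : ℕ) :
    ‖∑ i ∈ range r, w ^ i‖ ≤ 2 / ‖w - 1‖ := by
  have hne : ‖w - 1‖ > 0 := by simpa [sub_eq_zero] using hw1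
  rw [le_div_iff₀ hne]
  calc ‖∑ i ∈ range r, w ^ i‖ * ‖w - 1‖ = ‖(∑ i ∈ range r, w ^ i) * (w - 1)‖ := (norm_mul _ _).symm
    _ = ‖w ^ r - 1‖ := by rw [geom_sum_mul]
    _ ≤ ‖w ^ r‖ + 1 := by simpa using norm_sub_le (w ^ r) 1
    _ ≤ 2 := by
        have : ‖w ^ r‖ ≤ 1 := by rw [norm_pow]; exact pow_le_one₀ (norm_nonneg _) hw
        linarith

lemma geom_Ioc_norm_le (w : ℂ) (hw : ‖w‖ = 1) (hw1 : w ≠ 1) (m j : ℕ) :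
    ‖∑ k ∈ Ioc m j, w ^ k‖ ≤ 2 / ‖w - 1‖ := by
  have h1 : ∑ k ∈ Ioc m j, w ^ k = w ^ (m+1) * ∑ i ∈ range (j + 1 - (m+1)), w ^ i := by
    rw [← Finset.Ico_add_one_add_one_eq_Ioc, Finset.sum_Ico_eq_sum_range, Finset.mul_sum]
    exact Finset.sum_congr rfl fun i _ => by rw [← pow_add]
  rw [h1, norm_mul, norm_pow, hw, one_pow, one_mul]
  exact geom_norm_le w hw.le hw1 _

section tail

lemma norm_inv_sub_one (w : ℂ) (hw : ‖w‖ = 1) : ‖w⁻¹ - 1‖ = ‖w - 1‖ := by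
  have hw0 : w ≠ 0 := by intro h; rw [h] at hw; simp at hw
  have : w⁻¹ - 1 = w⁻¹ * (1 - w) := by field_simp
  rw [this, norm_mul, norm_inv, hw, inv_one, one_mul, norm_sub_rev]

lemma G_norm_le (w : ℂ) (hw : ‖w‖ = 1) (hw1 : w ≠ 1) (m j : ℕ) :
    ‖∑ k ∈ Finset.Ioc m j, (w ^ k - w⁻¹ ^ k)‖ ≤ 4 / ‖w - 1‖ := by
  have hwi : ‖w⁻¹‖ = 1 := by rw [norm_inv, hw, inv_one]
  have hwi1 : w⁻¹ ≠ 1 := by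
    intro h; apply hw1; rw [← inv_inv w, h, inv_one]
  calc ‖∑ k ∈ Finset.Ioc m j, (w ^ k - w⁻¹ ^ k)‖
      = ‖(∑ k ∈ Finset.Ioc m j, w ^ k) - ∑ k ∈ Finset.Ioc m j, w⁻¹ ^ k‖ := by
        rw [Finset.sum_sub_distrib]
    _ ≤ ‖∑ k ∈ Finset.Ioc m j, w ^ k‖ + ‖∑ k ∈ Finset.Ioc m j, w⁻¹ ^ k‖ := norm_sub_le _ _
    _ ≤ 2 / ‖w - 1‖ + 2 / ‖w⁻¹ - 1‖ := by
        gcongr <;> [exact geom_Ioc_norm_le w hw hw1 m j; exact geom_Ioc_norm_le w⁻¹ hwi hwi1 m j]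
    _ = 4 / ‖w - 1‖ := by rw [norm_inv_sub_one w hw]; ring

lemma abel_bound (w : ℂ) (hw : ‖w‖ = 1) (hw1 : w ≠ 1) (m : ℕ) : ∀ n, m ≤ n →
    ‖(∑ k ∈ Finset.Ioc m n, (k : ℂ)⁻¹ * (w ^ k - w⁻¹ ^ k)) -
      ((n + 1 : ℂ))⁻¹ * ∑ k ∈ Finset.Ioc m n, (w ^ k - w⁻¹ ^ k)‖ ≤
      (4 / ‖w - 1‖) * (1 / (m + 1) - 1 / (n + 1)) := by
  intro n hn
  induction n, hn using Nat.le_induction with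
  | base => simp
  | succ n hn ih =>
    have hsum : ∀ f : ℕ → ℂ, ∑ k ∈ Finset.Ioc m (n + 1), f k
        = (∑ k ∈ Finset.Ioc m n, f k) + f (n + 1) := by
      intro f
      rw [Finset.sum_Ioc_succ_top hn]
    set T := ∑ k ∈ Finset.Ioc m n, (k : ℂ)⁻¹ * (w ^ k - w⁻¹ ^ k) with hT
    set G := ∑ k ∈ Finset.Ioc m n, (w ^ k - w⁻¹ ^ k) with hG
    set a := w ^ (n+1) - w⁻¹ ^ (n+1) with ha
    have key : (∑ k ∈ Finset.Ioc m (n+1), (k : ℂ)⁻¹ * (w ^ k - w⁻¹ ^ k)) -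
        ((n + 1 + 1 : ℂ))⁻¹ * ∑ k ∈ Finset.Ioc m (n+1), (w ^ k - w⁻¹ ^ k)
        = (T - ((n + 1 : ℂ))⁻¹ * G) +
          (((n+1:ℂ))⁻¹ - ((n+2:ℂ))⁻¹) * (G + a) := by
      rw [hsum, hsum]
      push_cast
      ring
    push_cast
    rw [key]
    have hGa : ‖G + a‖ ≤ 4 / ‖w - 1‖ := by
      have := G_norm_le w hw hw1 m (n+1)
      rwa [hsum] at this
    have hcoef : ‖((n+1:ℂ))⁻¹ - ((n+2:ℂ))⁻¹‖ = 1 / ((n:ℝ)+1) - 1 / ((n:ℝ)+2) := by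
      have : ((n+1:ℂ))⁻¹ - ((n+2:ℂ))⁻¹ = ((1 / ((n:ℝ)+1) - 1 / ((n:ℝ)+2) : ℝ) : ℂ) := by
        push_cast
        ring
      rw [this, Complex.norm_real, Real.norm_eq_abs, abs_of_nonneg]
      have h1 : 1 / ((n:ℝ)+2) ≤ 1 / ((n:ℝ)+1) := by
        apply one_div_le_one_div_of_le <;> [positivity; linarith]
      linarith
    calc ‖(T - ((n + 1 : ℂ))⁻¹ * G) + (((n+1:ℂ))⁻¹ - ((n+2:ℂ))⁻¹) * (G + a)‖
        ≤ ‖T - ((n + 1 : ℂ))⁻¹ * G‖ + ‖(((n+1:ℂ))⁻¹ - ((n+2:ℂ))⁻¹) * (G + a)‖ := norm_add_le _ _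
      _ ≤ (4 / ‖w - 1‖) * (1 / (m + 1) - 1 / (n + 1)) +
          (1 / ((n:ℝ)+1) - 1 / ((n:ℝ)+2)) * (4 / ‖w - 1‖) := by
          refine add_le_add ih ?_
          rw [norm_mul, hcoef]
          have h1 : 1 / ((n:ℝ)+2) ≤ 1 / ((n:ℝ)+1) := by
            apply one_div_le_one_div_of_le <;> [positivity; linarith]
          exact mul_le_mul le_rfl hGa (norm_nonneg _) (by linarith)
      _ = (4 / ‖w - 1‖) * (1 / (m + 1) - 1 / ((n:ℝ) + 1 + 1)) := by push_cast; ring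

lemma tail_bound (w : ℂ) (hw : ‖w‖ = 1) (hw1 : w ≠ 1) (m n : ℕ) (hmn : m ≤ n) :
    ‖∑ k ∈ Finset.Ioc m n, (k : ℂ)⁻¹ * (w ^ k - w⁻¹ ^ k)‖ ≤ (4 / ‖w - 1‖) * (1 / (m + 1)) := by
  have h1 := abel_bound w hw hw1 m n hmn
  have hninv : ‖((n + 1 : ℂ))⁻¹‖ = 1 / ((n:ℝ)+1) := by
    rw [norm_inv, show ((n:ℂ)+1) = (((n:ℝ)+1 : ℝ) : ℂ) by push_cast; ring, Complex.norm_real,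
      Real.norm_eq_abs, abs_of_nonneg (by positivity), one_div]
  have h2 : ‖((n + 1 : ℂ))⁻¹ * ∑ k ∈ Finset.Ioc m n, (w ^ k - w⁻¹ ^ k)‖
      ≤ (1 / ((n:ℝ)+1)) * (4 / ‖w - 1‖) := by
    rw [norm_mul, hninv]
    exact mul_le_mul le_rfl (G_norm_le w hw hw1 m n) (norm_nonneg _) (by positivity)
  calc ‖∑ k ∈ Finset.Ioc m n, (k : ℂ)⁻¹ * (w ^ k - w⁻¹ ^ k)‖
      ≤ ‖(∑ k ∈ Finset.Ioc m n, (k : ℂ)⁻¹ * (w ^ k - w⁻¹ ^ k)) -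
          ((n + 1 : ℂ))⁻¹ * ∑ k ∈ Finset.Ioc m n, (w ^ k - w⁻¹ ^ k)‖ +
        ‖((n + 1 : ℂ))⁻¹ * ∑ k ∈ Finset.Ioc m n, (w ^ k - w⁻¹ ^ k)‖ := by
        nth_rewrite 1 [show (∑ k ∈ Finset.Ioc m n, (k : ℂ)⁻¹ * (w ^ k - w⁻¹ ^ k))
          = ((∑ k ∈ Finset.Ioc m n, (k : ℂ)⁻¹ * (w ^ k - w⁻¹ ^ k)) -
            ((n + 1 : ℂ))⁻¹ * ∑ k ∈ Finset.Ioc m n, (w ^ k - w⁻¹ ^ k)) +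
            ((n + 1 : ℂ))⁻¹ * ∑ k ∈ Finset.Ioc m n, (w ^ k - w⁻¹ ^ k) by ring]
        exact norm_add_le _ _
    _ ≤ (4 / ‖w - 1‖) * (1 / (m + 1) - 1 / (n + 1)) + (1 / ((n:ℝ)+1)) * (4 / ‖w - 1‖) := by
        gcongr
    _ = (4 / ‖w - 1‖) * (1 / (m + 1)) := by ring

end tail

lemma key_bound (w : ℂ) (hw : ‖w‖ = 1) (n : ℕ) :
    ‖∑ k ∈ Finset.Icc 1 n, (k : ℂ)⁻¹ * (w ^ k - w⁻¹ ^ k)‖ ≤ 9 := by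
  have hw0 : w ≠ 0 := by intro h; rw [h] at hw; simp at hw
  by_cases hw2 : w ^ 2 = 1
  · have hinv : w⁻¹ = w := inv_eq_of_mul_eq_one_right (by rw [← sq]; exact hw2)
    rw [hinv]
    simp
  · -- main case
    have hw1 : w ≠ 1 := by intro h; rw [h] at hw2; simp at hw2
    have hδ : 0 < ‖w ^ 2 - 1‖ := by
      rw [norm_pos_iff, sub_ne_zero]; exact hw2
    set δ := ‖w ^ 2 - 1‖ with hδdef
    set m := Nat.floor (1 / δ) with hm
    have hmδ : (m : ℝ) * δ ≤ 1 := by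
      have := Nat.floor_le (le_of_lt (by positivity : (0:ℝ) < 1 / δ))
      calc (m : ℝ) * δ ≤ (1 / δ) * δ := by gcongr
        _ = 1 := by field_simp
    have hδm : 1 / ((m : ℝ) + 1) < δ := by
      have h := Nat.lt_floor_add_one (1 / δ)
      rw [div_lt_iff₀ (by positivity)]
      rw [div_lt_iff₀ hδ] at h
      linarith [h]
    -- termwise bound
    have hterm : ∀ k ∈ Finset.Ioc 0 (min n m), ‖(k : ℂ)⁻¹ * (w ^ k - w⁻¹ ^ k)‖ ≤ δ := by
      intro k hk
      rw [Finset.mem_Ioc] at hk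
      have hk0 : 0 < k := hk.1
      have hfact : w ^ k - w⁻¹ ^ k = w⁻¹ ^ k * ((w ^ 2) ^ k - 1) := by
        rw [mul_sub, mul_one, ← mul_pow, sq, ← mul_assoc, inv_mul_cancel₀ hw0, one_mul]
      have hkinv : ‖(k : ℂ)⁻¹‖ = 1 / (k : ℝ) := by
        rw [norm_inv, Complex.norm_natCast, one_div]
      rw [hfact, norm_mul, norm_mul, hkinv, norm_pow, norm_inv, hw, inv_one, one_pow, one_mul]
      have hb := pow_sub_one_norm_le (w ^ 2) (by rw [norm_pow, hw, one_pow]) k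
      calc 1 / (k : ℝ) * ‖(w ^ 2) ^ k - 1‖ ≤ 1 / (k : ℝ) * ((k : ℝ) * δ) := by
            gcongr
        _ = δ := by field_simp
    have hhead : ‖∑ k ∈ Finset.Ioc 0 (min n m), (k : ℂ)⁻¹ * (w ^ k - w⁻¹ ^ k)‖ ≤ 1 := by
      calc ‖∑ k ∈ Finset.Ioc 0 (min n m), (k : ℂ)⁻¹ * (w ^ k - w⁻¹ ^ k)‖
          ≤ ∑ k ∈ Finset.Ioc 0 (min n m), ‖(k : ℂ)⁻¹ * (w ^ k - w⁻¹ ^ k)‖ := norm_sum_le _ _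
        _ ≤ ∑ _k ∈ Finset.Ioc 0 (min n m), δ := Finset.sum_le_sum hterm
        _ = (min n m : ℝ) * δ := by rw [Finset.sum_const, Nat.card_Ioc]; simp [mul_comm]
        _ ≤ (m : ℝ) * δ := mul_le_mul_of_nonneg_right (by exact_mod_cast min_le_right n m) hδ.le
        _ ≤ 1 := hmδ
    have htail : ‖∑ k ∈ Finset.Ioc (min n m) n, (k : ℂ)⁻¹ * (w ^ k - w⁻¹ ^ k)‖ ≤ 8 := by
      rcases le_or_gt n m with h | h
      · rw [min_eq_left h]
        simp
      · rw [min_eq_right h.le]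
        have hb := tail_bound w hw hw1 m n h.le
        have hfac : ‖w ^ 2 - 1‖ = ‖w - 1‖ * ‖w + 1‖ := by
          rw [← norm_mul]; congr 1; ring
        have hwm1 : 0 < ‖w - 1‖ := by
          rw [norm_pos_iff, sub_ne_zero]; exact hw1
        have hwp : ‖w + 1‖ ≤ 2 := by
          calc ‖w + 1‖ ≤ ‖w‖ + ‖(1:ℂ)‖ := norm_add_le _ _
            _ = 2 := by rw [hw, norm_one]; norm_num
        calc ‖∑ k ∈ Finset.Ioc m n, (k : ℂ)⁻¹ * (w ^ k - w⁻¹ ^ k)‖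
            ≤ (4 / ‖w - 1‖) * (1 / ((m : ℝ) + 1)) := hb
          _ ≤ (4 / ‖w - 1‖) * δ := by gcongr
          _ = 4 * (‖w - 1‖ / ‖w - 1‖) * ‖w + 1‖ := by rw [hδdef, hfac]; ring
          _ = 4 * ‖w + 1‖ := by rw [div_self hwm1.ne']; ring
          _ ≤ 8 := by linarith
    have hsplit : ∑ k ∈ Finset.Icc 1 n, (k : ℂ)⁻¹ * (w ^ k - w⁻¹ ^ k)
        = (∑ k ∈ Finset.Ioc 0 (min n m), (k : ℂ)⁻¹ * (w ^ k - w⁻¹ ^ k)) +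
          ∑ k ∈ Finset.Ioc (min n m) n, (k : ℂ)⁻¹ * (w ^ k - w⁻¹ ^ k) := by
      rw [show Finset.Icc 1 n = Finset.Ioc 0 n by
        ext i; simp only [Finset.mem_Icc, Finset.mem_Ioc]; omega]
      exact (Finset.sum_Ioc_consecutive _ (Nat.zero_le _) (min_le_left n m)).symm
    rw [hsplit]
    calc ‖_ + _‖ ≤ _ := norm_add_le _ _
      _ ≤ (1 : ℝ) + 8 := add_le_add hhead htail
      _ = 9 := by norm_num

lemma shift_apply (ξ : H) (i : ℤ) : (bilateralShift ξ : ∀ _ : ℤ, ℂ) i = ξ (i - 1) := rfl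

lemma shift_symm_apply (ξ : H) (i : ℤ) :
    (bilateralShift.symm ξ : ∀ _ : ℤ, ℂ) i = ξ (i + 1) := rfl

lemma shift_zpow_apply (k : ℤ) (ξ : H) (i : ℤ) :
    ((bilateralShift ^ k) ξ : ∀ _ : ℤ, ℂ) i = ξ (i - k) := by
  induction k using Int.induction_on generalizing ξ i with
  | zero => simp
  | succ k ih =>
    rw [zpow_add_one]
    have h1 : ((bilateralShift ^ (k:ℤ) * bilateralShift) ξ : ∀ _ : ℤ, ℂ) i
        = ((bilateralShift ^ (k:ℤ)) (bilateralShift ξ) : ∀ _ : ℤ, ℂ) i := rfl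
    rw [h1, ih (bilateralShift ξ) i, shift_apply]
    rw [show i - (k:ℤ) - 1 = i - ((k:ℤ) + 1) by ring]
  | pred k ih =>
    rw [zpow_sub_one]
    have h1 : ((bilateralShift ^ (-k:ℤ) * bilateralShift⁻¹) ξ : ∀ _ : ℤ, ℂ) i
        = ((bilateralShift ^ (-k:ℤ)) (bilateralShift.symm ξ) : ∀ _ : ℤ, ℂ) i := rfl
    rw [h1, ih (bilateralShift.symm ξ) i, shift_symm_apply]
    rw [show i - (-k:ℤ) + 1 = i - (-(k:ℤ) - 1) by ring]

-- structural lemmas about toCLM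
lemma toCLM_mul (e f : H ≃ₗᵢ[ℂ] H) : toCLM (e * f) = toCLM e * toCLM f := rfl

lemma toCLM_one : toCLM 1 = 1 := rfl

/-- the shift as a unit of the operator algebra -/
def U : (H →L[ℂ] H)ˣ where
  val := toCLM bilateralShift
  inv := toCLM bilateralShift.symm
  val_inv := by
    ext ξ x
    show (bilateralShift (bilateralShift.symm ξ) : ∀ _ : ℤ, ℂ) x = (ξ : ∀ _ : ℤ, ℂ) x
    rw [shift_apply, shift_symm_apply, show x - 1 + 1 = x by ring]
  inv_val := by
    ext ξ x
    show (bilateralShift.symm (bilateralShift ξ) : ∀ _ : ℤ, ℂ) x = (ξ : ∀ _ : ℤ, ℂ) x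
    rw [shift_symm_apply, shift_apply, show x + 1 - 1 = x by ring]

lemma toCLM_zpow (k : ℤ) : toCLM (bilateralShift ^ k) = ((U ^ k : (H →L[ℂ] H)ˣ) : H →L[ℂ] H) := by
  induction k using Int.induction_on with
  | zero => rfl
  | succ k ih => rw [zpow_add_one, zpow_add_one, toCLM_mul, ih]; rfl
  | pred k ih => rw [zpow_sub_one, zpow_sub_one, toCLM_mul, ih]; rfl

lemma adjoint_toCLM (e : H ≃ₗᵢ[ℂ] H) :
    ContinuousLinearMap.adjoint (toCLM e) = toCLM e.symm := by
  symm
  rw [ContinuousLinearMap.eq_adjoint_iff]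
  intro x y
  have : inner ℂ (toCLM e.symm x) y = inner ℂ (e (e.symm x)) (e y) := (e.inner_map_map _ _).symm
  rw [this, e.apply_symm_apply]
  rfl

lemma U_mem_unitary : (U : H →L[ℂ] H) ∈ unitary (H →L[ℂ] H) := by
  rw [Unitary.mem_iff]
  constructor
  · rw [ContinuousLinearMap.star_eq_adjoint, show (U : H →L[ℂ] H) = toCLM bilateralShift from rfl,
      adjoint_toCLM]
    exact U.inv_val
  · rw [ContinuousLinearMap.star_eq_adjoint, show (U : H →L[ℂ] H) = toCLM bilateralShift from rfl,
      adjoint_toCLM]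
    exact U.val_inv

lemma spectrum_U_subset : spectrum ℂ ((U : H →L[ℂ] H)) ⊆ Metric.sphere 0 1 :=
  spectrum.subset_circle_of_unitary U_mem_unitary

lemma star_U_zpow (j : ℤ) :
    star ((U ^ j : (H →L[ℂ] H)ˣ) : H →L[ℂ] H) = ((U ^ (-j) : (H →L[ℂ] H)ˣ) : H →L[ℂ] H) := by
  rw [← toCLM_zpow, ← toCLM_zpow, ContinuousLinearMap.star_eq_adjoint, adjoint_toCLM]
  congr 1
  rw [zpow_neg]
  rfl

lemma norm_sum_zpow_le (s : Finset ℤ) (β : ℤ → ℂ) (B : ℝ)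
    (hB : ∀ w : ℂ, ‖w‖ = 1 → ‖∑ k ∈ s, β k * w ^ k‖ ≤ B) :
    ‖∑ k ∈ s, β k • ((U ^ k : (H →L[ℂ] H)ˣ) : H →L[ℂ] H)‖ ≤ B := by
  classical
  have hB0 : (0:ℝ) ≤ B := le_trans (norm_nonneg _) (hB 1 (by simp))
  set n : ℕ := s.sup fun k => k.natAbs with hn
  have hkn : ∀ k ∈ s, 0 ≤ k + n := by
    intro k hk
    have : k.natAbs ≤ n := Finset.le_sup (f := fun k : ℤ => k.natAbs) hk
    omega
  set u : H →L[ℂ] H := (U : H →L[ℂ] H) with hu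
  set A := ∑ k ∈ s, β k • ((U ^ k : (H →L[ℂ] H)ˣ) : H →L[ℂ] H) with hA
  set M := A * ((U ^ (n:ℤ) : (H →L[ℂ] H)ˣ) : H →L[ℂ] H) with hM
  have hM' : M = ∑ k ∈ s, β k • ((U ^ (k + n) : (H →L[ℂ] H)ˣ) : H →L[ℂ] H) := by
    rw [hM, hA, Finset.sum_mul]
    refine Finset.sum_congr rfl fun k _ => ?_
    rw [smul_mul_assoc, ← Units.val_mul, ← zpow_add]
  -- normality
  haveI hnormal : IsStarNormal M := by
    constructor
    rw [commute_iff_eq, hM']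
    rw [star_sum]
    simp only [star_smul, star_U_zpow]
    rw [Finset.sum_mul_sum, Finset.sum_mul_sum]
    rw [Finset.sum_comm]
    refine Finset.sum_congr rfl fun k _ => Finset.sum_congr rfl fun l _ => ?_
    rw [smul_mul_smul_comm, smul_mul_smul_comm, ← Units.val_mul, ← Units.val_mul,
      ← zpow_add, ← zpow_add, mul_comm (star (β l)) (β k),
      add_comm (-(l + (n:ℤ))) (k + (n:ℤ))]
  -- M as a polynomial in u
  set P : Polynomial ℂ := ∑ k ∈ s, Polynomial.C (β k) * Polynomial.X ^ ((k + n).toNat) with hP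
  have hMP : M = Polynomial.aeval u P := by
    rw [hM', hP, map_sum]
    refine Finset.sum_congr rfl fun k hk => ?_
    rw [map_mul, Polynomial.aeval_C, map_pow, Polynomial.aeval_X, Algebra.smul_def]
    congr 2
    have h1 : U ^ (k + (n:ℤ)) = U ^ ((k + n).toNat) := by
      rw [← zpow_natCast U ((k + n).toNat), Int.toNat_of_nonneg (hkn k hk)]
    rw [h1, Units.val_pow_eq_pow_val]
  haveI : Nontrivial H := ⟨lp.single 2 (0:ℤ) (1:ℂ), 0, by
    intro h
    have h0 : (lp.single 2 (0:ℤ) (1:ℂ) : ∀ _ : ℤ, ℂ) 0 = ((0 : H) : ∀ _ : ℤ, ℂ) 0 := by rw [h]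
    rw [lp.single_apply_self] at h0
    simpa using h0⟩
  -- spectrum bound
  have hspec : ∀ z ∈ spectrum ℂ M, ‖z‖ ≤ B := by
    intro z hz
    rw [hMP, spectrum.map_polynomial_aeval] at hz
    obtain ⟨w, hw, rfl⟩ := hz
    show ‖Polynomial.eval w P‖ ≤ B
    have hw1 : ‖w‖ = 1 := by
      have := spectrum_U_subset hw
      simpa [Metric.mem_sphere] using this
    have hw0 : w ≠ 0 := by intro h; rw [h] at hw1; simp at hw1
    have heval : Polynomial.eval w P = (∑ k ∈ s, β k * w ^ k) * w ^ (n:ℤ) := by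
      rw [hP, Polynomial.eval_finset_sum, Finset.sum_mul]
      refine Finset.sum_congr rfl fun k hk => ?_
      rw [Polynomial.eval_mul, Polynomial.eval_C, Polynomial.eval_pow, Polynomial.eval_X,
        mul_assoc]
      congr 1
      rw [← zpow_natCast w ((k + n).toNat), Int.toNat_of_nonneg (hkn k hk),
        zpow_add₀ hw0]
    rw [heval, norm_mul]
    have : ‖w ^ (n:ℤ)‖ = 1 := by rw [norm_zpow, hw1, one_zpow]
    rw [this, mul_one]
    exact hB w hw1
  have hrad : spectralRadius ℂ M ≤ ENNReal.ofReal B := by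
    rw [spectralRadius]
    refine iSup₂_le fun z hz => ?_
    rw [show ((‖z‖₊ : ℝ≥0∞)) = ENNReal.ofReal ‖z‖ from (ofReal_norm z).symm]
    exact ENNReal.ofReal_le_ofReal (hspec z hz)
  have hMnorm : ‖M‖ ≤ B := by
    have h1 : (‖M‖₊ : ℝ≥0∞) ≤ ENNReal.ofReal B := by
      rw [← IsStarNormal.spectralRadius_eq_nnnorm M]
      exact hrad
    rw [show ((‖M‖₊ : ℝ≥0∞)) = ENNReal.ofReal ‖M‖ from (ofReal_norm M).symm] at h1
    exact (ENNReal.ofReal_le_ofReal_iff hB0).mp h1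
  -- ‖A‖ = ‖M‖
  have hAM : ‖A‖ = ‖M‖ := by
    rw [hM, ContinuousLinearMap.mul_def, ← toCLM_zpow]
    exact (ContinuousLinearMap.opNorm_comp_linearIsometryEquiv A (bilateralShift ^ (n:ℤ))).symm
  rw [hAM]
  exact hMnorm

section lower
open scoped ComplexConjugate

/-- indicator of `[0, N)` as an element of `ℓ²(ℤ)` -/
def indic (N : ℕ) : H :=
  ⟨fun i => if 0 ≤ i ∧ i < N then 1 else 0, by
    apply memℓp_gen
    apply summable_of_ne_finset_zero (s := Finset.Icc (0:ℤ) (N - 1))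
    intro i hi
    rw [Finset.mem_Icc] at hi
    have : ¬(0 ≤ i ∧ i < N) := by omega
    simp [this]⟩

lemma indic_apply (N : ℕ) (i : ℤ) :
    (indic N : ∀ _ : ℤ, ℂ) i = if 0 ≤ i ∧ i < N then 1 else 0 := rfl

lemma apply_sum_coord (t : Finset ℤ) (β : ℤ → ℂ) (ξ : H) (i : ℤ) :
    (((∑ k ∈ t, β k • toCLM (bilateralShift ^ k)) ξ : H) : ∀ _ : ℤ, ℂ) i
      = ∑ k ∈ t, β k * ξ (i - k) := by
  rw [ContinuousLinearMap.sum_apply]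
  induction t using Finset.induction_on with
  | empty => simp [lp.coeFn_zero]
  | insert _ _ hnotmem =>
    rename_i a t' ih
    rw [Finset.sum_insert hnotmem, Finset.sum_insert hnotmem, lp.coeFn_add, Pi.add_apply, ih]
    congr 1
    rw [ContinuousLinearMap.smul_apply, lp.coeFn_smul, Pi.smul_apply]
    rw [show (toCLM (bilateralShift ^ a)) ξ = (bilateralShift ^ a) ξ from rfl, shift_zpow_apply]
    simp [smul_eq_mul]

lemma inner_indic (t : Finset ℤ) (β : ℤ → ℂ) (N : ℕ) :
    (inner ℂ (indic N) ((∑ k ∈ t, β k • toCLM (bilateralShift ^ k)) (indic N)) : ℂ)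
      = ∑ i ∈ Finset.Icc (0:ℤ) (N - 1), ∑ k ∈ t, β k * (indic N : ∀ _ : ℤ, ℂ) (i - k) := by
  rw [lp.inner_eq_tsum]
  rw [tsum_eq_sum (s := Finset.Icc (0:ℤ) (N - 1))]
  · refine Finset.sum_congr rfl fun i hi => ?_
    rw [Finset.mem_Icc] at hi
    rw [RCLike.inner_apply, apply_sum_coord, indic_apply]
    have : (0 ≤ i ∧ i < N) := by omega
    rw [if_pos this, map_one, mul_one]
  · intro i hi
    rw [Finset.mem_Icc] at hi
    rw [RCLike.inner_apply, indic_apply]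
    have : ¬(0 ≤ i ∧ i < N) := by omega
    rw [if_neg this, map_zero, mul_zero]

lemma norm_indic_sq (N : ℕ) : (inner ℂ (indic N) (indic N) : ℂ) = (N : ℂ) := by
  rw [lp.inner_eq_tsum, tsum_eq_sum (s := Finset.Icc (0:ℤ) (N - 1))]
  · have h1 : ∀ i ∈ Finset.Icc (0:ℤ) (N-1),
        (inner ℂ ((indic N : ∀ _ : ℤ, ℂ) i) ((indic N : ∀ _ : ℤ, ℂ) i) : ℂ) = 1 := by
      intro i hi
      rw [Finset.mem_Icc] at hi
      rw [RCLike.inner_apply, indic_apply, if_pos (show (0:ℤ) ≤ i ∧ i < N by omega)]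
      simp
    rw [Finset.sum_congr rfl h1, Finset.sum_const, Int.card_Icc, nsmul_eq_mul, mul_one]
    congr 1
    omega
  · intro i hi
    rw [Finset.mem_Icc] at hi
    rw [RCLike.inner_apply, indic_apply, if_neg (show ¬((0:ℤ) ≤ i ∧ i < N) by omega), map_zero,
      zero_mul]
end lower

lemma lower_bound (n : ℕ) (hn : 1 ≤ n) :
    (∑ k ∈ Finset.Icc (1:ℤ) (n:ℤ), 1/(k:ℝ)) - 1 ≤
      ‖∑ k ∈ Finset.Icc (1:ℤ) (n:ℤ), ((k:ℂ))⁻¹ • toCLM (bilateralShift ^ k)‖ := by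
  classical
  set N : ℕ := n * n with hN
  have hnN' : n ≤ N := by rw [hN]; nlinarith
  have hnN : (n:ℤ) ≤ N := by exact_mod_cast hnN'
  have hN1 : 1 ≤ N := le_trans hn hnN' 
  set T := ∑ k ∈ Finset.Icc (1:ℤ) (n:ℤ), ((k:ℂ))⁻¹ • toCLM (bilateralShift ^ k) with hT
  set x := indic N with hx
  -- count
  have hcount : ∀ k ∈ Finset.Icc (1:ℤ) (n:ℤ),
      ∑ i ∈ Finset.Icc (0:ℤ) ((N:ℤ) - 1), (indic N : ∀ _ : ℤ, ℂ) (i - k)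
        = ((((N:ℤ) - k).toNat : ℕ) : ℂ) := by
    intro k hk
    rw [Finset.mem_Icc] at hk
    have h1 : ∀ i ∈ Finset.Icc (0:ℤ) ((N:ℤ) - 1),
        (indic N : ∀ _ : ℤ, ℂ) (i - k) = if k ≤ i then 1 else 0 := by
      intro i hi
      rw [Finset.mem_Icc] at hi
      rw [indic_apply]
      by_cases h : k ≤ i
      · rw [if_pos (show (0:ℤ) ≤ i - k ∧ i - k < N by omega), if_pos h]
      · rw [if_neg (show ¬((0:ℤ) ≤ i - k ∧ i - k < N) by omega), if_neg h]
    rw [Finset.sum_congr rfl h1, ← Finset.sum_filter]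
    have h2 : (Finset.Icc (0:ℤ) ((N:ℤ) - 1)).filter (fun i => k ≤ i)
        = Finset.Icc k ((N:ℤ) - 1) := by
      ext i
      simp only [Finset.mem_filter, Finset.mem_Icc]
      omega
    rw [h2, Finset.sum_const, Int.card_Icc, nsmul_eq_mul, mul_one]
    congr 1
    omega
  -- the inner product value
  have hV : (inner ℂ x (T x) : ℂ)
      = ∑ k ∈ Finset.Icc (1:ℤ) (n:ℤ), ((k:ℂ))⁻¹ * ((((N:ℤ) - k).toNat : ℕ) : ℂ) := by
    rw [hT, hx, inner_indic, Finset.sum_comm]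
    refine Finset.sum_congr rfl fun k hk => ?_
    rw [← Finset.mul_sum, hcount k hk]
  set r : ℝ := ∑ k ∈ Finset.Icc (1:ℤ) (n:ℤ), ((((N:ℤ) - k).toNat : ℕ) : ℝ)/(k:ℝ) with hr
  have hVr : (inner ℂ x (T x) : ℂ) = ((r : ℝ) : ℂ) := by
    rw [hV, hr]
    push_cast
    refine Finset.sum_congr rfl fun k hk => ?_
    rw [Finset.mem_Icc] at hk
    rw [div_eq_inv_mul]
  have hr0 : 0 ≤ r := by
    apply Finset.sum_nonneg
    intro k hk
    rw [Finset.mem_Icc] at hk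
    have : (0:ℝ) ≤ (k:ℝ) := by exact_mod_cast le_trans (by norm_num) hk.1
    positivity
  -- ‖x‖² = N
  have hxnorm : ‖x‖^2 = (N:ℝ) := by
    have h1 : (inner ℂ x x : ℂ) = ((‖x‖:ℝ) : ℂ)^2 := inner_self_eq_norm_sq_to_K x
    rw [hx, norm_indic_sq] at h1
    exact_mod_cast h1.symm
  -- bound
  have hbound : r ≤ ‖T‖ * N := by
    have h1 : ‖(inner ℂ x (T x) : ℂ)‖ ≤ ‖x‖ * ‖T x‖ := norm_inner_le_norm x (T x)
    rw [hVr] at h1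
    rw [Complex.norm_real, Real.norm_eq_abs, abs_of_nonneg hr0] at h1
    have h2 : ‖T x‖ ≤ ‖T‖ * ‖x‖ := T.le_opNorm x
    nlinarith [norm_nonneg x, norm_nonneg (T x), norm_nonneg T, hxnorm]
  -- arithmetic
  have hcard : (Finset.Icc (1:ℤ) (n:ℤ)).card = n := by rw [Int.card_Icc]; omega
  have hterm : ∀ k ∈ Finset.Icc (1:ℤ) (n:ℤ),
      ((((N:ℤ) - k).toNat : ℕ) : ℝ)/(k:ℝ) = (N:ℝ) * (1/(k:ℝ)) - 1 := by
    intro k hk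
    rw [Finset.mem_Icc] at hk
    have hk0 : (0:ℝ) < (k:ℝ) := by exact_mod_cast lt_of_lt_of_le zero_lt_one hk.1
    have hge : (0:ℤ) ≤ (N:ℤ) - k := by omega
    have htn : ((((N:ℤ) - k).toNat : ℕ) : ℝ) = (N:ℝ) - (k:ℝ) := by
      rw [show ((((N:ℤ) - k).toNat : ℕ) : ℝ) = (((((N:ℤ) - k).toNat : ℕ) : ℤ) : ℝ) by push_cast; ring,
        Int.toNat_of_nonneg hge]
      push_cast
      ring
    rw [htn]
    field_simp
  have harith : ((∑ k ∈ Finset.Icc (1:ℤ) (n:ℤ), 1/(k:ℝ)) - 1) * N ≤ r := by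
    rw [hr, Finset.sum_congr rfl hterm, Finset.sum_sub_distrib, ← Finset.mul_sum,
      Finset.sum_const, hcard, nsmul_eq_mul, mul_one]
    have hNn : (n:ℝ) ≤ (N:ℝ) := by exact_mod_cast hnN'
    nlinarith [hNn]
  have hNpos : (0:ℝ) < N := by exact_mod_cast hN1
  have h3 : ((∑ k ∈ Finset.Icc (1:ℤ) (n:ℤ), 1/(k:ℝ)) - 1) * N ≤ ‖T‖ * N := le_trans harith hbound
  exact le_of_mul_le_mul_right h3 hNpos

lemma int_icc_sum {M : Type*} [AddCommMonoid M] (F : ℤ → M) (n : ℕ) :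
    ∑ k ∈ Finset.Icc (1:ℤ) (n:ℤ), F k = ∑ k ∈ Finset.Icc 1 n, F (k:ℤ) := by
  refine Finset.sum_nbij' (fun k => k.toNat) (fun k => (k:ℤ)) ?_ ?_ ?_ ?_ ?_ <;>
      intro a ha <;> simp only [Finset.mem_Icc] at * <;> beta_reduce <;> try omega
  congr 1
  omega

lemma neg_image : ∀ n : ℕ, (Finset.Icc (1:ℤ) (n:ℤ)).image (fun k => -k) = Finset.Icc (-(n:ℤ)) (-1) := by
  intro n
  ext i
  simp only [Finset.mem_image, Finset.mem_Icc]
  constructor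
  · rintro ⟨a, ha, rfl⟩; omega
  · intro h; exact ⟨-i, by omega, by ring⟩

lemma split_s (n : ℕ) (g : ℤ → ℂ) :
    ∑ k ∈ (Finset.Icc (-(n:ℤ)) (n:ℤ)).erase 0, g k
      = ∑ k ∈ Finset.Icc (1:ℤ) (n:ℤ), (g k + g (-k)) := by
  have hs : (Finset.Icc (-(n:ℤ)) (n:ℤ)).erase 0
      = Finset.Icc (1:ℤ) (n:ℤ) ∪ Finset.Icc (-(n:ℤ)) (-1) := by
    ext i
    simp only [Finset.mem_erase, Finset.mem_Icc, Finset.mem_union]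
    omega
  have hdisj : Disjoint (Finset.Icc (1:ℤ) (n:ℤ)) (Finset.Icc (-(n:ℤ)) (-1)) := by
    rw [Finset.disjoint_left]
    intro a ha hb
    rw [Finset.mem_Icc] at *
    omega
  rw [hs, Finset.sum_union hdisj, Finset.sum_add_distrib]
  congr 1
  rw [← neg_image n, Finset.sum_image (by intro a _ b _ h; simpa using h)]

/-- **Triangular truncation is unbounded in the operator norm.**  For every `C > 0`
there is a finitely supported `α : ℤ → ℂ` with
`‖∑_{k ≥ 0} α(k) Sᵏ‖ > C ‖∑_{k ∈ ℤ} α(k) Sᵏ‖`, where `S` is the bilateral shift and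
`Sᵏ` denotes its `k`-th power in the group of unitaries (inverse powers for `k < 0`). -/
theorem triangular_truncation_unbounded (C : ℝ) (hC : 0 < C) :
    ∃ α : ℤ →₀ ℂ,
      C * ‖∑ k ∈ α.support, α k • toCLM (bilateralShift ^ k)‖ <
        ‖∑ k ∈ α.support.filter (fun k => 0 ≤ k), α k • toCLM (bilateralShift ^ k)‖ := by
  classical
  -- choose n with large harmonic sum
  obtain ⟨n, hn1, hharm⟩ : ∃ n : ℕ, 1 ≤ n ∧ 9 * C + 2 < ∑ k ∈ Finset.Icc (1:ℤ) (n:ℤ), 1/(k:ℝ) := by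
    have h := Real.tendsto_sum_range_one_div_nat_succ_atTop
    rw [Filter.tendsto_atTop] at h
    obtain ⟨n0, hn0⟩ := (h (9 * C + 3)).exists
    refine ⟨n0 + 1, by omega, ?_⟩
    have heq : ∑ k ∈ Finset.Icc (1:ℤ) ((n0 + 1 : ℕ):ℤ), 1/(k:ℝ)
        = ∑ i ∈ Finset.range (n0 + 1), 1/((i:ℝ)+1) := by
      rw [int_icc_sum (fun k => 1/(k:ℝ)) (n0+1), ← Finset.Ico_add_one_right_eq_Icc,
        Finset.sum_Ico_eq_sum_range]
      refine Finset.sum_congr (by norm_num) fun i _ => by push_cast; rw [add_comm]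
    rw [heq]
    have hmono : ∑ i ∈ Finset.range n0, 1/((i:ℝ)+1) ≤ ∑ i ∈ Finset.range (n0+1), 1/((i:ℝ)+1) := by
      apply Finset.sum_le_sum_of_subset_of_nonneg (by simp)
      intro i _ _; positivity
    linarith
  set s : Finset ℤ := (Finset.Icc (-(n:ℤ)) (n:ℤ)).erase 0 with hs
  set f : ℤ → ℂ := fun k => if k ∈ s then (k:ℂ)⁻¹ else 0 with hf
  have hmem : ∀ a : ℤ, a ∈ s ↔ f a ≠ 0 := by
    intro a
    constructor
    · intro ha
      rw [hf]; simp only [if_pos ha]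
      have : a ≠ 0 := by
        rw [hs, Finset.mem_erase] at ha; exact ha.1
      simpa using this
    · intro ha
      by_contra hns
      rw [hf] at ha; simp [if_neg hns] at ha
  refine ⟨⟨s, f, hmem⟩, ?_⟩
  have hsupp : (Finsupp.mk s f hmem).support = s := rfl
  have happ : ∀ k, (Finsupp.mk s f hmem) k = f k := fun k => rfl
  rw [hsupp]
  simp only [happ]
  -- the two operator sums
  have hfull : ∑ k ∈ s, f k • toCLM (bilateralShift ^ k)
      = ∑ k ∈ s, (k:ℂ)⁻¹ • ((U ^ k : (H →L[ℂ] H)ˣ) : H →L[ℂ] H) := by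
    refine Finset.sum_congr rfl fun k hk => ?_
    rw [hf]; simp only [if_pos hk]; rw [toCLM_zpow]
  have hfilter : s.filter (fun k => 0 ≤ k) = Finset.Icc (1:ℤ) (n:ℤ) := by
    ext i
    rw [hs]
    simp only [Finset.mem_filter, Finset.mem_erase, Finset.mem_Icc]
    omega
  have htrunc : ∑ k ∈ s.filter (fun k => 0 ≤ k), f k • toCLM (bilateralShift ^ k)
      = ∑ k ∈ Finset.Icc (1:ℤ) (n:ℤ), (k:ℂ)⁻¹ • toCLM (bilateralShift ^ k) := by
    rw [hfilter]
    refine Finset.sum_congr rfl fun k hk => ?_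
    have hk' : k ∈ s := by
      rw [← hfilter] at hk
      exact Finset.mem_of_mem_filter _ hk
    rw [hf]; simp only [if_pos hk']
  rw [hfull, htrunc]
  -- upper bound for the full sum
  have hupper : ‖∑ k ∈ s, (k:ℂ)⁻¹ • ((U ^ k : (H →L[ℂ] H)ˣ) : H →L[ℂ] H)‖ ≤ 9 := by
    apply norm_sum_zpow_le
    intro w hw
    have hw0 : w ≠ 0 := by intro h; rw [h] at hw; simp at hw
    have hsplit : ∑ k ∈ s, (k:ℂ)⁻¹ * w ^ k
        = ∑ k ∈ Finset.Icc (1:ℤ) (n:ℤ), ((k:ℂ)⁻¹ * w ^ k + ((-k:ℤ):ℂ)⁻¹ * w ^ (-k)) := by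
      rw [hs, split_s n (fun k => (k:ℂ)⁻¹ * w ^ k)]
    have hpair : ∀ k ∈ Finset.Icc (1:ℤ) (n:ℤ),
        (k:ℂ)⁻¹ * w ^ k + ((-k:ℤ):ℂ)⁻¹ * w ^ (-k) = (k:ℂ)⁻¹ * (w ^ k - w ^ (-k)) := by
      intro k hk
      push_cast
      ring
    rw [hsplit, Finset.sum_congr rfl hpair,
      int_icc_sum (fun k => (k:ℂ)⁻¹ * (w ^ k - w ^ (-k))) n]
    have hzp : ∀ k ∈ Finset.Icc 1 n, ((k:ℤ):ℂ)⁻¹ * (w ^ ((k:ℕ):ℤ) - w ^ (-((k:ℕ):ℤ)))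
        = (k:ℂ)⁻¹ * (w ^ k - w⁻¹ ^ k) := by
      intro k hk
      rw [zpow_neg, zpow_natCast, ← inv_pow]
      push_cast
      ring
    rw [Finset.sum_congr rfl hzp]
    exact key_bound w hw n
  -- lower bound for the truncation
  have hlower := lower_bound n hn1
  calc C * ‖∑ k ∈ s, (k:ℂ)⁻¹ • ((U ^ k : (H →L[ℂ] H)ˣ) : H →L[ℂ] H)‖
      ≤ C * 9 := by
        exact mul_le_mul_of_nonneg_left hupper hC.le
    _ < (∑ k ∈ Finset.Icc (1:ℤ) (n:ℤ), 1/(k:ℝ)) - 1 := by linarith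
    _ ≤ ‖∑ k ∈ Finset.Icc (1:ℤ) (n:ℤ), (k:ℂ)⁻¹ • toCLM (bilateralShift ^ k)‖ := hlower
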